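/- Assume a ∼_φ b and that the graph G_φ is a path. Then for every n ≥ 1 and every λ ∈ 𝒜_n, every rewrite sequence from λ has length at most n·(log n + 1), where log denotes the natural logarithm. -/

import Mathlib

open scoped BigOperators

/-- The size `|λ| = Σ_i i·m_i(λ)` of a partition, identified with its
multiplicity function (a finitely supported function `ℕ+ →₀ ℕ`). -/
def psize (lam : ℕ+ →₀ ℕ) : ℕ := lam.sum fun i m => (i : ℕ) * m

/-- `λ ∈ 𝒜`: every multiplicity satisfies `m_i(λ) < a_i`
(automatic when `a_i = ∞`). -/
def InA (a : ℕ+ → ℕ∞) (lam : ℕ+ →₀ ℕ) : Prop := ∀ i, (lam i : ℕ∞) < a i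

/-- `a ∼_φ b` : the sequences `a, b` take values in `{1,2,…} ∪ {∞}`,
`φ` is a bijection from `supp(a) = {i : a_i < ∞}` onto `supp(b) = {j : b_j < ∞}`,
and `i·a_i = φ(i)·b_{φ(i)}` for all `i ∈ supp(a)`. -/
def PhiEquiv (a b : ℕ+ → ℕ∞) (phi : ℕ+ → ℕ+) : Prop :=
  (∀ i, a i ≠ 0) ∧ (∀ i, b i ≠ 0) ∧
  Set.BijOn phi {i | a i ≠ ⊤} {j | b j ≠ ⊤} ∧
  (∀ i, a i ≠ ⊤ → ((i : ℕ) : ℕ∞) * a i = ((phi i : ℕ) : ℕ∞) * b (phi i))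

/-- One step `μ → μ'` of O'Hara's algorithm: for some `j ∈ supp(b)` with
`m_j(μ) ≥ b_j`, remove `b_j` parts equal to `j` and add `a_i` parts equal to
`i`, where `i = φ⁻¹(j)`. -/
def OStep (a b : ℕ+ → ℕ∞) (phi : ℕ+ → ℕ+) (mu mu' : ℕ+ →₀ ℕ) : Prop :=
  ∃ i j : ℕ+, phi i = j ∧ a i ≠ ⊤ ∧ b j ≠ ⊤ ∧ b j ≤ (mu j : ℕ∞) ∧
    ∀ l, mu' l = mu l + (if l = i then (a i).toNat else 0)
                      - (if l = j then (b j).toNat else 0)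

/-- The graph `G_φ` is a path: there are an interval `I ⊆ ℤ` and an
injective map `k ↦ i_k` from `I` onto `supp(a) ∪ supp(b)` with
`φ(i_{k+1}) = i_k` whenever `k, k+1 ∈ I`, and every element of `supp(a)`
is of the form `i_k` with `k - 1 ∈ I`. -/
def IsPathGraph (a b : ℕ+ → ℕ∞) (phi : ℕ+ → ℕ+) : Prop :=
  ∃ (I : Set ℤ) (f : ℤ → ℕ+),
    I.OrdConnected ∧
    Set.InjOn f I ∧
    f '' I = {i | a i ≠ ⊤} ∪ {j | b j ≠ ⊤} ∧
    (∀ k, k ∈ I → k + 1 ∈ I → phi (f (k + 1)) = f k) ∧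
    (∀ i : ℕ+, a i ≠ ⊤ → ∃ k ∈ I, f k = i ∧ k - 1 ∈ I)

/-!
Put weights on the part sizes along the path: the size at level `k` gets `Σ 1/m` over the sizes
`m ≤ n` at levels `≤ k`, so that `w i = w (φ i) + 1/i`, and sizes off the path get `0`. A step
trades `b_j` parts `j = φ i` for `a_i` parts `i`; as `i·a_i = j·b_j`, it keeps the size `n` and
raises the potential `Σ_i i·m_i·w i` by exactly `a_i ≥ 1`. Every weight is at most
`H_n ≤ 1 + log n`, so the potential never exceeds `n (1 + log n)`.
-/

open Finsupp

section Size

lemma psize_add (μ ν : ℕ+ →₀ ℕ) : psize (μ + ν) = psize μ + psize ν :=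
  Finsupp.sum_add_index' (fun _ => mul_zero _) fun _ => mul_add _

lemma psize_single (i : ℕ+) (m : ℕ) : psize (single i m) = i * m :=
  Finsupp.sum_single_index (mul_zero _)

noncomputable def weightedSize (w : ℕ+ → ℝ) (μ : ℕ+ →₀ ℕ) : ℝ :=
  μ.sum fun i m => (i : ℝ) * m * w i

variable (w : ℕ+ → ℝ)

lemma weightedSize_add (μ ν : ℕ+ →₀ ℕ) :
    weightedSize w (μ + ν) = weightedSize w μ + weightedSize w ν :=
  Finsupp.sum_add_index' (fun _ => by simp) fun _ _ _ => by push_cast; ring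

lemma weightedSize_single (i : ℕ+) (m : ℕ) :
    weightedSize w (single i m) = i * m * w i :=
  Finsupp.sum_single_index (by simp)

lemma weightedSize_nonneg (hw : ∀ i, 0 ≤ w i) (μ : ℕ+ →₀ ℕ) : 0 ≤ weightedSize w μ :=
  Finset.sum_nonneg fun i _ => mul_nonneg (by positivity) (hw i)

lemma weightedSize_le (C : ℝ) (hw : ∀ i, w i ≤ C) (μ : ℕ+ →₀ ℕ) :
    weightedSize w μ ≤ psize μ * C := by
  simp only [weightedSize, psize, Finsupp.sum, Nat.cast_sum, Nat.cast_mul, Finset.sum_mul]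
  exact Finset.sum_le_sum fun i _ => mul_le_mul_of_nonneg_left (hw i) (by positivity)

end Size

section Step

variable {a b : ℕ+ → ℕ∞} {phi : ℕ+ → ℕ+}

lemma PhiEquiv.mul_toNat_eq (h : PhiEquiv a b phi) {i : ℕ+} (ha : a i ≠ ⊤) (hb : b (phi i) ≠ ⊤) :
    (i : ℕ) * (a i).toNat = phi i * (b (phi i)).toNat := by
  have := h.2.2.2 i ha
  rw [← ENat.natCast_toNat ha, ← ENat.natCast_toNat hb] at this
  exact_mod_cast this

lemma PhiEquiv.one_le_toNat (h : PhiEquiv a b phi) {i : ℕ+} (ha : a i ≠ ⊤) :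
    1 ≤ (a i).toNat :=
  Nat.one_le_iff_ne_zero.2 (by simp [ENat.toNat_eq_zero, h.1 i, ha])

lemma OStep.exists_eq_add_single {μ μ' : ℕ+ →₀ ℕ} (hs : OStep a b phi μ μ') :
    ∃ i ν, a i ≠ ⊤ ∧ b (phi i) ≠ ⊤ ∧
      μ = ν + single (phi i) (b (phi i)).toNat ∧ μ' = ν + single i (a i).toNat := by
  obtain ⟨i, j, rfl, ha, hb, hle, hμ'⟩ := hs
  have hle : (b (phi i)).toNat ≤ μ (phi i) := by
    rw [← ENat.natCast_toNat hb] at hle; exact_mod_cast hle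
  refine ⟨i, μ - single (phi i) (b (phi i)).toNat, ha, hb, ?_, ?_⟩ <;> ext l <;>
    simp only [hμ', coe_add, coe_tsub, Pi.add_apply, Pi.sub_apply, single_apply, eq_comm (a := l)] <;>
    generalize phi i = j at * <;> split_ifs <;> subst_vars <;> omega

lemma OStep.psize_eq (h : PhiEquiv a b phi) {μ μ' : ℕ+ →₀ ℕ} (hs : OStep a b phi μ μ') :
    psize μ' = psize μ := by
  obtain ⟨i, ν, ha, hb, rfl, rfl⟩ := hs.exists_eq_add_single
  simp only [psize_add, psize_single, h.mul_toNat_eq ha hb]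

lemma OStep.weightedSize_add_one_le (h : PhiEquiv a b phi) {μ μ' : ℕ+ →₀ ℕ}
    (hs : OStep a b phi μ μ') (w : ℕ+ → ℝ)
    (hw : ∀ i, a i ≠ ⊤ → (i : ℕ) ≤ psize μ → w i = w (phi i) + (i : ℝ)⁻¹) :
    weightedSize w μ + 1 ≤ weightedSize w μ' := by
  obtain ⟨i, ν, ha, hb, rfl, rfl⟩ := hs.exists_eq_add_single
  have hrel : ((i : ℕ) : ℝ) * (a i).toNat = (phi i : ℕ) * (b (phi i)).toNat := by
    exact_mod_cast h.mul_toNat_eq ha hb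
  have hi : (i : ℕ) ≤ psize (ν + single (phi i) (b (phi i)).toNat) := by
    rw [psize_add, psize_single, ← h.mul_toNat_eq ha hb]
    nlinarith [h.one_le_toNat ha]
  have ha1 : (1 : ℝ) ≤ (a i).toNat := by exact_mod_cast h.one_le_toNat ha
  have hi0 : ((i : ℕ) : ℝ) ≠ 0 := by positivity
  simp only [weightedSize_add, weightedSize_single, hw i ha hi]
  rw [← hrel]
  field_simp
  linarith

end Step

section PathWeight

noncomputable def harmonicOn (n : ℕ) (T : Set ℕ) : ℝ :=
  ∑ m ∈ Finset.Icc 1 n, T.indicator (fun m : ℕ => (m : ℝ)⁻¹) m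

lemma harmonicOn_nonneg (n : ℕ) (T : Set ℕ) : 0 ≤ harmonicOn n T :=
  Finset.sum_nonneg fun _ _ => Set.indicator_nonneg (fun _ _ => by positivity) _

lemma harmonicOn_le_harmonic (n : ℕ) (T : Set ℕ) : harmonicOn n T ≤ harmonic n := by
  rw [harmonic_eq_sum_Icc]
  push_cast
  exact Finset.sum_le_sum fun _ _ => Set.indicator_le_self' (fun _ _ => by positivity) _

lemma harmonicOn_insert {n m : ℕ} {T : Set ℕ} (hm : m ∈ Finset.Icc 1 n) (hmT : m ∉ T) :
    harmonicOn n (insert m T) = harmonicOn n T + (m : ℝ)⁻¹ := by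
  rw [harmonicOn, Set.insert_eq, Set.indicator_union_of_disjoint (by simpa using hmT)]
  simp only [Finset.sum_add_distrib, Set.indicator_singleton, Finset.sum_pi_single', if_pos hm]
  rw [add_comm, harmonicOn]

variable {I : Set ℤ} {f : ℤ → ℕ+}

def pathBelow (I : Set ℤ) (f : ℤ → ℕ+) (i : ℕ+) : Set ℕ :=
  (fun l => (f l : ℕ)) '' {l ∈ I | ∃ l' ∈ I, f l' = i ∧ l ≤ l'}

lemma pathBelow_apply (hinj : Set.InjOn f I) {k : ℤ} (hk : k ∈ I) :
    pathBelow I f (f k) = (fun l => (f l : ℕ)) '' {l ∈ I | l ≤ k} := by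
  refine congrArg _ (Set.sep_ext_iff.2 fun l _ => ⟨?_, fun hl => ⟨k, hk, rfl, hl⟩⟩)
  rintro ⟨l', hl', hfl', hll'⟩
  exact hinj hl' hk hfl' ▸ hll'

lemma harmonicOn_pathBelow_eq_add (hinj : Set.InjOn f I) {k : ℤ} (hk : k ∈ I) (hk1 : k - 1 ∈ I)
    {n : ℕ} (hn : (f k : ℕ) ≤ n) :
    harmonicOn n (pathBelow I f (f k)) =
      harmonicOn n (pathBelow I f (f (k - 1))) + ((f k : ℕ) : ℝ)⁻¹ := by
  have hlevels : {l ∈ I | l ≤ k} = insert k {l ∈ I | l ≤ k - 1} := by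
    ext l
    simp only [Set.mem_insert_iff, Set.mem_sep_iff]
    grind
  have hnew : (f k : ℕ) ∉ (fun l => (f l : ℕ)) '' {l ∈ I | l ≤ k - 1} := by
    rintro ⟨l, ⟨hl, hlk⟩, hfl⟩
    have := hinj hl hk (PNat.coe_injective hfl)
    omega
  rw [pathBelow_apply hinj hk, pathBelow_apply hinj hk1, hlevels, Set.image_insert_eq,
    harmonicOn_insert (Finset.mem_Icc.2 ⟨(f k).pos, hn⟩) hnew]

lemma IsPathGraph.exists_weight {a b : ℕ+ → ℕ∞} {phi : ℕ+ → ℕ+} (hpath : IsPathGraph a b phi)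
    (n : ℕ) : ∃ w : ℕ+ → ℝ, (∀ i, 0 ≤ w i) ∧ (∀ i, w i ≤ harmonic n) ∧
      ∀ i, a i ≠ ⊤ → (i : ℕ) ≤ n → w i = w (phi i) + (i : ℝ)⁻¹ := by
  obtain ⟨I, f, -, hinj, -, hphi, hsupp⟩ := hpath
  refine ⟨fun i => harmonicOn n (pathBelow I f i), fun _ => harmonicOn_nonneg _ _,
    fun _ => harmonicOn_le_harmonic _ _, fun i ha hi => ?_⟩
  obtain ⟨k, hk, rfl, hk1⟩ := hsupp i ha
  have hphik : phi (f k) = f (k - 1) := by simpa using hphi (k - 1) hk1 (by simpa using hk)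
  rw [hphik]
  exact harmonicOn_pathBelow_eq_add hinj hk hk1 hi

end PathWeight

theorem invariant_and_add_le_of_chain {α : Type*} {R : α → α → Prop} {Q : α → Prop}
    {P : α → ℝ} (hR : ∀ x y, Q x → R x y → Q y ∧ P x + 1 ≤ P y) {seq : ℕ → α} {k : ℕ}
    (h0 : Q (seq 0)) (hseq : ∀ l < k, R (seq l) (seq (l + 1))) :
    Q (seq k) ∧ P (seq 0) + k ≤ P (seq k) := by
  induction k with
  | zero => simpa using h0
  | succ k ih =>
    obtain ⟨hQ, hP⟩ := ih fun l hl => hseq l (by omega)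
    obtain ⟨hQ', hP'⟩ := hR _ _ hQ (hseq k (by omega))
    exact ⟨hQ', by push_cast; linarith⟩

theorem ohara_path_bound_general (a b : ℕ+ → ℕ∞) (phi : ℕ+ → ℕ+)
    (h : PhiEquiv a b phi) (hpath : IsPathGraph a b phi)
    (n : ℕ) (lam : ℕ+ →₀ ℕ)
    (hsize : psize lam = n)
    (seq : ℕ → (ℕ+ →₀ ℕ)) (k : ℕ) (hseq0 : seq 0 = lam)
    (hseq : ∀ l < k, OStep a b phi (seq l) (seq (l + 1))) :
    (k : ℝ) ≤ n * (Real.log n + 1) := by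
  obtain ⟨w, hw0, hwH, hwφ⟩ := hpath.exists_weight n
  have hstep : ∀ μ μ', psize μ = n → OStep a b phi μ μ' →
      psize μ' = n ∧ weightedSize w μ + 1 ≤ weightedSize w μ' := fun μ μ' hμ hs =>
    ⟨(hs.psize_eq h).trans hμ, hs.weightedSize_add_one_le h w fun i ha hi => hwφ i ha (hμ ▸ hi)⟩
  obtain ⟨hsize_k, hgain⟩ := invariant_and_add_le_of_chain hstep (hseq0 ▸ hsize) hseq
  calc (k : ℝ) ≤ weightedSize w (seq k) - weightedSize w (seq 0) := by linarith
    _ ≤ n * harmonic n - 0 := by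
      gcongr
      · simpa [hsize_k] using weightedSize_le w _ hwH (seq k)
      · exact weightedSize_nonneg w hw0 _
    _ ≤ n * (Real.log n + 1) := by
      rw [sub_zero, add_comm]
      gcongr
      exact harmonic_le_one_add_log n

/-- if `G_φ` is a path, then for every `n ≥ 1` and every
`λ ∈ 𝒜_n`, every rewrite sequence from `λ` has length at most
`n · (log n + 1)`. -/
theorem ohara_path_bound (a b : ℕ+ → ℕ∞) (phi : ℕ+ → ℕ+)
    (h : PhiEquiv a b phi) (hpath : IsPathGraph a b phi)
    (n : ℕ) (hn : 1 ≤ n) (lam : ℕ+ →₀ ℕ)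
    (hlam : InA a lam) (hsize : psize lam = n)
    (seq : ℕ → (ℕ+ →₀ ℕ)) (k : ℕ) (hseq0 : seq 0 = lam)
    (hseq : ∀ l < k, OStep a b phi (seq l) (seq (l + 1))) :
    (k : ℝ) ≤ n * (Real.log n + 1) :=
  ohara_path_bound_general a b phi h hpath n lam hsize seq k hseq0 hseq
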